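/- arXiv:0812.2590 — 8 statements merged into one kernel-verified Lean document; each statement's English description precedes it below -/
import Mathlib

section
/- If G is a finite group and N is a normal subgroup of G, and α, β are real numbers with 0 ≤ α ≤ 1 and 0 ≤ β ≤ 1 such that k(N) ≥ |N|^α and k(G/N) ≥ |G/N|^β, where k denotes the number of conjugacy classes, then k(G) > |G|^(αβ/(1+α+β)) ≥ |G|^(αβ/3). -/
/-!
Write `m = |G|`, `n = |N|`, `q = |G : N|` and `s = m ^ (α / (1 + α + β))`. Counting commuting
pairs gives `k(N) ≤ k(G) q`, and `k(G/N) < k(G)` as soon as `N ≠ 1`. If `q < s`, then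
`k(G) ≥ n ^ α / q = m ^ α / q ^ (1 + α) > m ^ α / s ^ (1 + α) = m ^ (αβ / (1 + α + β))`;
if `q ≥ s`, then `k(G) > k(G/N) ≥ q ^ β ≥ s ^ β`, which is the same power of `m`.
For `N = 1` the bound follows from `k(G) ≥ m ^ β` and `k(G) > 1`.
-/

open Real

theorem Real.rpow_lt_of_one_le_of_le {x k c : ℝ} (hx : 1 ≤ x) (hxk : x ≤ k) (hk : 1 < k)
    (hc : c < 1) : x ^ c < k := by
  rcases hx.eq_or_lt with rfl | hx
  · rwa [one_rpow]
  · exact (rpow_lt_self_of_one_lt hx hc).trans_le hxk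

theorem Real.rpow_lt_rpow_div_of_lt {n q α β : ℝ} (hn : 0 < n) (hq : 0 < q) (hα : 0 ≤ α)
    (hβ : 0 ≤ β) (hqs : q < (n * q) ^ (α / (1 + α + β))) :
    (n * q) ^ (α * β / (1 + α + β)) < n ^ α / q := by
  have hm : 0 < n * q := mul_pos hn hq
  have hd : 0 < 1 + α + β := by linarith
  have hexp : α - α / (1 + α + β) * (α + 1) = α * β / (1 + α + β) := by
    field_simp
    ring
  calc (n * q) ^ (α * β / (1 + α + β))
      = (n * q) ^ α / ((n * q) ^ (α / (1 + α + β))) ^ (α + 1) := by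
        rw [← rpow_mul hm.le, ← rpow_sub hm, hexp]
    _ < (n * q) ^ α / q ^ (α + 1) := by
        gcongr
    _ = n ^ α / q := by
        rw [mul_rpow hn.le hq.le, rpow_add_one hq.ne', mul_comm (q ^ α) q,
          mul_div_mul_right _ _ (by positivity)]

section ConjClasses

variable {G : Type*} [Group G] [Finite G]

theorem Subgroup.card_conjClasses_le_mul_index (H : Subgroup G) :
    Nat.card (ConjClasses H) ≤ Nat.card (ConjClasses G) * H.index := by
  have hcomm : Nat.card { p : H × H // Commute p.1 p.2 } ≤
      Nat.card { p : G × G // Commute p.1 p.2 } :=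
    Nat.card_le_card_of_injective (fun p ↦ ⟨⟨p.1.1, p.1.2⟩, Subtype.ext_iff.mp p.2⟩)
      fun p q h ↦ by simpa only [Subtype.ext_iff, Prod.ext_iff] using h
  rw [card_comm_eq_card_conjClasses_mul_card, card_comm_eq_card_conjClasses_mul_card,
    ← H.card_mul_index, ← mul_assoc, mul_right_comm] at hcomm
  exact Nat.le_of_mul_le_mul_right hcomm Nat.card_pos

theorem QuotientGroup.card_conjClasses_le (N : Subgroup G) [N.Normal] :
    Nat.card (ConjClasses (G ⧸ N)) ≤ Nat.card (ConjClasses G) :=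
  Nat.card_le_card_of_surjective _ (ConjClasses.map_surjective (QuotientGroup.mk'_surjective N))

theorem QuotientGroup.card_conjClasses_lt {N : Subgroup G} [N.Normal] (hN : N ≠ ⊥) :
    Nat.card (ConjClasses (G ⧸ N)) < Nat.card (ConjClasses G) := by
  obtain ⟨x, hx⟩ := Subgroup.ne_bot_iff_exists_ne_one.mp hN
  have hsurj := ConjClasses.map_surjective (QuotientGroup.mk'_surjective N)
  refine lt_of_not_ge fun hle ↦ hx ?_
  have hconj : ConjClasses.mk (x : G) = ConjClasses.mk 1 :=
    (hsurj.bijective_of_nat_card_le hle).injective <| by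
      change ConjClasses.mk (mk' N x) = ConjClasses.mk (mk' N 1)
      rw [map_one, mk'_apply, (eq_one_iff (x : G)).mpr x.2]
  exact Subtype.ext (isConj_one_left.mp (ConjClasses.mk_eq_mk_iff_isConj.mp hconj))

theorem one_lt_card_conjClasses [Nontrivial G] : 1 < Nat.card (ConjClasses G) := by
  obtain ⟨g, hg⟩ := exists_ne (1 : G)
  have : Nontrivial (ConjClasses G) := ⟨ConjClasses.mk g, ConjClasses.mk 1,
    fun h ↦ hg (isConj_one_left.mp (ConjClasses.mk_eq_mk_iff_isConj.mp h))⟩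
  exact Finite.one_lt_card

theorem rpow_mul_lt_card_conjClasses [Nontrivial G] {β c : ℝ} (hβ : 0 ≤ β) (hc : c < 1)
    (hG : (Nat.card G : ℝ) ^ β ≤ Nat.card (ConjClasses G)) :
    (Nat.card G : ℝ) ^ (β * c) < Nat.card (ConjClasses G) := by
  rw [rpow_mul (Nat.cast_nonneg _)]
  exact rpow_lt_of_one_le_of_le (one_le_rpow (by exact_mod_cast Nat.card_pos) hβ) hG
    (Nat.one_lt_cast.mpr one_lt_card_conjClasses) hc

theorem Subgroup.rpow_card_lt_card_conjClasses_of_ne_bot {N : Subgroup G} [N.Normal]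
    (hNbot : N ≠ ⊥) {α β : ℝ} (hα : 0 ≤ α) (hβ : 0 ≤ β)
    (hN : (Nat.card N : ℝ) ^ α ≤ Nat.card (ConjClasses N))
    (hQ : (Nat.card (G ⧸ N) : ℝ) ^ β ≤ Nat.card (ConjClasses (G ⧸ N))) :
    (Nat.card G : ℝ) ^ (α * β / (1 + α + β)) < Nat.card (ConjClasses G) := by
  have hn : (0 : ℝ) < Nat.card N := by exact_mod_cast Nat.card_pos
  have hq : (0 : ℝ) < Nat.card (G ⧸ N) := by exact_mod_cast Nat.card_pos
  have hm : (Nat.card G : ℝ) = Nat.card N * Nat.card (G ⧸ N) := by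
    exact_mod_cast N.card_mul_index.symm
  have hkN :
      (Nat.card (ConjClasses N) : ℝ) ≤ Nat.card (ConjClasses G) * Nat.card (G ⧸ N) := by
    exact_mod_cast N.card_conjClasses_le_mul_index
  have hkQ : (Nat.card (ConjClasses (G ⧸ N)) : ℝ) < Nat.card (ConjClasses G) := by
    exact_mod_cast QuotientGroup.card_conjClasses_lt hNbot
  set m : ℝ := (Nat.card G : ℝ)
  set q : ℝ := (Nat.card (G ⧸ N) : ℝ)
  rcases lt_or_ge q (m ^ (α / (1 + α + β))) with hsmall | hlarge
  · calc m ^ (α * β / (1 + α + β)) < (Nat.card N : ℝ) ^ α / q := by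
          rw [hm] at hsmall ⊢
          exact rpow_lt_rpow_div_of_lt hn hq hα hβ hsmall
      _ ≤ Nat.card (ConjClasses N) / q := by gcongr
      _ ≤ Nat.card (ConjClasses G) := by rwa [div_le_iff₀ hq]
  · calc m ^ (α * β / (1 + α + β)) = (m ^ (α / (1 + α + β))) ^ β := by
          rw [← rpow_mul (Nat.cast_nonneg _), div_mul_eq_mul_div]
      _ ≤ q ^ β := by gcongr
      _ < Nat.card (ConjClasses G) := hQ.trans_lt hkQ

end ConjClasses

/-- Bertram's lemma: if `k(N) ≥ |N|^α` and `k(G/N) ≥ |G/N|^β`, then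
`k(G) > |G|^(αβ/(1+α+β)) ≥ |G|^(αβ/3)`. -/
theorem stmt0 (G : Type*) [Group G] [Finite G] [Nontrivial G]
    (N : Subgroup G) [N.Normal] (α β : ℝ)
    (hα0 : 0 ≤ α) (hα1 : α ≤ 1) (hβ0 : 0 ≤ β) (hβ1 : β ≤ 1)
    (hN : (Nat.card (ConjClasses N) : ℝ) ≥ (Nat.card N : ℝ) ^ α)
    (hQ : (Nat.card (ConjClasses (G ⧸ N)) : ℝ) ≥ (Nat.card (G ⧸ N) : ℝ) ^ β) :
    (Nat.card (ConjClasses G) : ℝ) > (Nat.card G : ℝ) ^ (α * β / (1 + α + β)) ∧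
      (Nat.card G : ℝ) ^ (α * β / (1 + α + β)) ≥ (Nat.card G : ℝ) ^ (α * β / 3) := by
  have hd : 0 < 1 + α + β := by linarith
  refine ⟨?_, rpow_le_rpow_of_exponent_le (by exact_mod_cast Nat.card_pos)
    (div_le_div_of_nonneg_left (mul_nonneg hα0 hβ0) hd (by linarith))⟩
  rcases eq_or_ne N ⊥ with rfl | hNbot
  · rw [← Subgroup.index_eq_card, Subgroup.index_bot] at hQ
    have hG : (Nat.card G : ℝ) ^ β ≤ Nat.card (ConjClasses G) :=
      hQ.trans (by exact_mod_cast QuotientGroup.card_conjClasses_le ⊥)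
    rw [mul_comm, mul_div_assoc]
    exact rpow_mul_lt_card_conjClasses hβ0 ((div_lt_one hd).mpr (by linarith)) hG
  · exact Subgroup.rpow_card_lt_card_conjClasses_of_ne_bot hNbot hα0 hβ0 hN hQ
end

section
/- Let G be a finite group with |G| ≥ 4 and N ⊴ G nilpotent, and suppose k(G/N) ≥ 2^(x·(log₂|G/N|)^(1/t)) for constants 0 < x ≤ 1 and t ≥ 1. Then k(G) ≥ x^t · log₂|G| / (2·(log₂ log₂ |G|)^t). -/
/-!
Let `κ(H)` be the number of conjugacy classes of `G` meeting `H`. Induct on the centre `Z` of the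
nilpotent normal subgroup `N`, which is normal in `G`. Since `N` centralizes `Z`, every `G`-class
in `Z` has at most `|G : N|` elements, so `|Z| ≤ |G : N| κ(Z)`; and the classes of `G` in `N` map
onto those of `G/Z` in `N/Z`, all the classes in `Z` going to the trivial one. This gives
`|N| ≤ (2|G : N|)^(κ(N) - 1)`, hence `log₂|G| ≤ k(G) (1 + log₂|G : N|)`.

With `ℓ = log₂ log₂|G|`: if `ℓ ≤ x (log₂|G : N|)^(1/t)` then `k(G) ≥ k(G/N) ≥ 2^ℓ = log₂|G|`;
otherwise `x^t log₂|G : N| < ℓ^t` and the first bound suffices.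
-/

open Subgroup

theorem Set.ncard_le_mul_ncard_image {α β : Type*} {f : α → β} {s : Set α} (hs : s.Finite)
    {n : ℕ} (hn : ∀ a ∈ s, (s ∩ f ⁻¹' {f a}).ncard ≤ n) : s.ncard ≤ n * (f '' s).ncard := by
  classical
  lift s to Finset α using hs
  rw [Set.ncard_coe_finset, ← Finset.coe_image, Set.ncard_coe_finset]
  refine Finset.card_le_mul_card_image s n fun b hb => ?_
  obtain ⟨a, ha, rfl⟩ := Finset.mem_image.mp hb
  convert hn a ha
  rw [← Set.ncard_coe_finset, Finset.coe_filter]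
  rfl

theorem Set.ncard_image_add_ncard_le {α β : Type*} {f : α → β} {s s₀ : Set α} (hs : s.Finite)
    (hs₀ : s₀ ⊆ s) {b : β} (hb : b ∈ f '' s) (hf : ∀ a ∈ s₀, f a = b) :
    (f '' s).ncard + s₀.ncard ≤ s.ncard + 1 := by
  have hsub : f '' s \ {b} ⊆ f '' (s \ s₀) := by
    rintro _ ⟨⟨a, ha, rfl⟩, hab⟩
    exact ⟨a, ⟨ha, fun ha₀ => hab (hf a ha₀)⟩, rfl⟩
  calc (f '' s).ncard + s₀.ncard = (f '' s \ {b}).ncard + 1 + s₀.ncard := by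
        rw [Set.ncard_sdiff_singleton_add_one hb (hs.image f)]
    _ ≤ (s \ s₀).ncard + 1 + s₀.ncard := by
        gcongr
        exact (Set.ncard_le_ncard hsub (hs.sdiff.image f)).trans (Set.ncard_image_le hs.sdiff)
    _ = s.ncard + 1 := by rw [add_right_comm, Set.ncard_sdiff_add_ncard_of_subset hs₀ hs]

theorem Nat.mul_le_two_mul_pow_sub_one {k : ℕ} (hk : 2 ≤ k) (b : ℕ) :
    k * b ≤ (2 * b) ^ (k - 1) := by
  rw [mul_pow]
  rcases b.eq_zero_or_pos with rfl | hb
  · simp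
  gcongr
  · have := Nat.lt_two_pow_self (n := k - 1); omega
  · exact Nat.le_self_pow (by omega) b

theorem ConjClasses.ncard_carrier_mk {G : Type*} [Group G] (g : G) :
    (ConjClasses.mk g).carrier.ncard = (centralizer {g}).index := by
  rw [centralizer_eq_comap_stabilizer, ← ConjAct.orbit_eq_carrier_conjClasses,
    ← MulAction.index_stabilizer]
  exact (index_comap_of_surjective _ ConjAct.toConjAct.surjective).symm

namespace Subgroup

variable {G : Type*} [Group G]

theorem exists_normal_ne_bot_le_centralizer (N : Subgroup G) [N.Normal] [Group.IsNilpotent N]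
    [Nontrivial N] : ∃ Z : Subgroup G, Z.Normal ∧ Z ≠ ⊥ ∧ Z ≤ N ∧ N ≤ centralizer Z := by
  refine ⟨(center N).map N.subtype, inferInstance, fun h => ?_, map_subtype_le _, ?_⟩
  · exact Group.IsNilpotent.center_ne_bot (G := N)
      ((map_eq_bot_iff_of_injective _ N.subtype_injective).mp h)
  · rintro g hg _ ⟨z, hz, rfl⟩
    exact (congrArg Subtype.val (mem_center_iff.mp hz ⟨g, hg⟩)).symm

variable [Finite G]

theorem ncard_le_index_mul_ncard_image_mk {N : Subgroup G} {s : Set G}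
    (hs : N ≤ centralizer s) : s.ncard ≤ N.index * (ConjClasses.mk '' s).ncard := by
  refine Set.ncard_le_mul_ncard_image s.toFinite fun g hg => ?_
  calc (s ∩ ConjClasses.mk ⁻¹' {ConjClasses.mk g}).ncard ≤ (ConjClasses.mk g).carrier.ncard :=
        Set.ncard_le_ncard fun _ h => ConjClasses.mem_carrier_iff_mk_eq.mpr h.2
    _ = (centralizer {g}).index := ConjClasses.ncard_carrier_mk g
    _ ≤ N.index := index_antitone (hs.trans (centralizer_le (Set.singleton_subset_iff.mpr hg)))

theorem card_map_mk'_mul_card {N Z : Subgroup G} [Z.Normal] (hZN : Z ≤ N) :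
    Nat.card (N.map (QuotientGroup.mk' Z)) * Nat.card Z = Nat.card N := by
  have hindex : (N.map (QuotientGroup.mk' Z)).index = N.index :=
    index_map_eq _ (QuotientGroup.mk'_surjective Z) (by rwa [QuotientGroup.ker_mk'])
  refine Nat.eq_of_mul_eq_mul_right (Nat.pos_of_ne_zero N.index_ne_zero_of_finite) ?_
  rw [card_mul_index, mul_right_comm, ← hindex, card_mul_index, ← index_eq_card, mul_comm,
    card_mul_index]

theorem ncard_image_mk_map_add_ncard_le {N Z : Subgroup G} [Z.Normal] (hZN : Z ≤ N) :
    (ConjClasses.mk '' (N.map (QuotientGroup.mk' Z) : Set (G ⧸ Z))).ncard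
      + (ConjClasses.mk '' (Z : Set G)).ncard ≤ (ConjClasses.mk '' (N : Set G)).ncard + 1 := by
  have himage : ConjClasses.mk '' (N.map (QuotientGroup.mk' Z) : Set (G ⧸ Z))
      = ConjClasses.map (QuotientGroup.mk' Z) '' (ConjClasses.mk '' (N : Set G)) := by
    rw [coe_map, Set.image_image, Set.image_image]
    rfl
  rw [himage]
  refine Set.ncard_image_add_ncard_le (Set.toFinite _) (Set.image_mono hZN)
    ⟨ConjClasses.mk 1, ⟨1, N.one_mem, rfl⟩, rfl⟩ ?_
  rintro _ ⟨z, hz, rfl⟩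
  exact congrArg ConjClasses.mk ((QuotientGroup.eq_one_iff z).mpr hz)

theorem one_le_ncard_image_mk (H : Subgroup G) : 1 ≤ (ConjClasses.mk '' (H : Set G)).ncard :=
  (Set.ncard_pos).mpr ⟨_, 1, H.one_mem, rfl⟩

theorem two_le_ncard_image_mk {H : Subgroup G} (hH : H ≠ ⊥) :
    2 ≤ (ConjClasses.mk '' (H : Set G)).ncard := by
  obtain ⟨h, hh, hh1⟩ := H.bot_or_exists_ne_one.resolve_left hH
  refine (Set.one_lt_ncard_iff).mpr ⟨_, _, ⟨1, H.one_mem, rfl⟩, ⟨h, hh, rfl⟩, fun hconj => hh1 ?_⟩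
  exact isConj_one_right.mp (ConjClasses.mk_eq_mk_iff_isConj.mp hconj)

theorem card_le_two_mul_index_pow (N : Subgroup G) [N.Normal] [Group.IsNilpotent N] :
    Nat.card N ≤ (2 * N.index) ^ ((ConjClasses.mk '' (N : Set G)).ncard - 1) := by
  induction hn : Nat.card N using Nat.strong_induction_on generalizing G with
  | _ n ih =>
  subst hn
  have hindex := N.index_ne_zero_of_finite
  rcases le_or_gt (Nat.card N) 1 with hle | hgt
  · exact hle.trans (Nat.one_le_pow _ _ (by omega))
  have : Nontrivial N := Finite.one_lt_card_iff_nontrivial.mp hgt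
  obtain ⟨Z, _, hZ, hZN, hNZ⟩ := exists_normal_ne_bot_le_centralizer N
  set N' := N.map (QuotientGroup.mk' Z)
  have : N'.Normal := Normal.map ‹_› _ (QuotientGroup.mk'_surjective Z)
  have : Group.IsNilpotent N' :=
    Group.nilpotent_of_surjective _ ((QuotientGroup.mk' Z).subgroupMap_surjective N)
  have hindex' : N'.index = N.index :=
    index_map_eq _ (QuotientGroup.mk'_surjective Z) (by rwa [QuotientGroup.ker_mk'])
  have hcard : Nat.card N' * Nat.card Z = Nat.card N := card_map_mk'_mul_card hZN
  have hcardZ : Nat.card Z ≤ N.index * (ConjClasses.mk '' (Z : Set G)).ncard := by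
    rw [← Nat.card_coe_set_eq]
    exact ncard_le_index_mul_ncard_image_mk hNZ
  have hsplit : (ConjClasses.mk '' (N' : Set (G ⧸ Z))).ncard
      + (ConjClasses.mk '' (Z : Set G)).ncard ≤ (ConjClasses.mk '' (N : Set G)).ncard + 1 :=
    ncard_image_mk_map_add_ncard_le hZN
  have hκZ := two_le_ncard_image_mk hZ
  have hκ' := one_le_ncard_image_mk N'
  have hN' : Nat.card N' < Nat.card N := by
    have := (one_lt_card_iff_ne_bot Z).mpr hZ
    nlinarith [Nat.card_pos (α := N')]
  have ih' := ih _ hN' N' rfl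
  rw [hindex'] at ih'
  calc Nat.card N = Nat.card N' * Nat.card Z := hcard.symm
    _ ≤ (2 * N.index) ^ ((ConjClasses.mk '' (N' : Set (G ⧸ Z))).ncard - 1) *
        (2 * N.index) ^ ((ConjClasses.mk '' (Z : Set G)).ncard - 1) := by
      gcongr
      exact hcardZ.trans ((mul_comm _ _).le.trans (Nat.mul_le_two_mul_pow_sub_one hκZ _))
    _ ≤ (2 * N.index) ^ ((ConjClasses.mk '' (N : Set G)).ncard - 1) := by
      rw [← pow_add]
      exact Nat.pow_le_pow_right (by omega) (by omega)

theorem card_le_two_mul_index_pow_card_conjClasses (N : Subgroup G) [N.Normal]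
    [Group.IsNilpotent N] : Nat.card G ≤ (2 * N.index) ^ Nat.card (ConjClasses G) := by
  have hκ := one_le_ncard_image_mk N
  calc Nat.card G = Nat.card N * N.index := (card_mul_index N).symm
    _ ≤ (2 * N.index) ^ ((ConjClasses.mk '' (N : Set G)).ncard - 1) * (2 * N.index) := by
      gcongr
      · exact card_le_two_mul_index_pow N
      · omega
    _ = (2 * N.index) ^ (ConjClasses.mk '' (N : Set G)).ncard := by
      rw [← pow_succ, Nat.sub_add_cancel hκ]
    _ ≤ (2 * N.index) ^ Nat.card (ConjClasses G) :=
      Nat.pow_le_pow_right (by have := N.index_ne_zero_of_finite; omega) (Set.ncard_le_card _)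

theorem logb_card_le_card_conjClasses_mul (N : Subgroup G) [N.Normal] [Group.IsNilpotent N] :
    Real.logb 2 (Nat.card G) ≤ Nat.card (ConjClasses G) * (1 + Real.logb 2 N.index) := by
  have hindex : (N.index : ℝ) ≠ 0 := Nat.cast_ne_zero.mpr N.index_ne_zero_of_finite
  calc Real.logb 2 (Nat.card G)
      ≤ Real.logb 2 (((2 * N.index) ^ Nat.card (ConjClasses G) : ℕ) : ℝ) :=
        Real.logb_le_logb_of_le one_lt_two (by exact_mod_cast Nat.card_pos)
          (by exact_mod_cast card_le_two_mul_index_pow_card_conjClasses N)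
    _ = Nat.card (ConjClasses G) * (1 + Real.logb 2 N.index) := by
      push_cast
      rw [Real.logb_pow, Real.logb_mul two_ne_zero hindex, Real.logb_self_eq_one one_lt_two]

end Subgroup

theorem Real.rpow_mul_div_two_mul_logb_rpow_le {x t L β k : ℝ} (hx : 0 < x)
    (hxL : x ≤ logb 2 L) (ht : 0 < t) (hβ : 0 ≤ β) (hlog : L ≤ k * (1 + β))
    (hexp : 2 ^ (x * β ^ (1 / t)) ≤ k) : x ^ t * L / (2 * logb 2 L ^ t) ≤ k := by
  set ℓ := logb 2 L
  have hℓ : 0 < ℓ := hx.trans_le hxL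
  have hL : L ≠ 0 := by rintro rfl; simp [ℓ] at hℓ
  have hxℓ : x ^ t ≤ ℓ ^ t := rpow_le_rpow hx.le hxL ht.le
  have hk : 0 < k := (rpow_pos_of_pos two_pos _).trans_le hexp
  rw [div_le_iff₀ (by positivity)]
  rcases le_or_gt ℓ (x * β ^ (1 / t)) with h | h
  · have hLk : L ≤ k := calc
      L ≤ |L| := le_abs_self L
      _ = 2 ^ ℓ := (rpow_logb_eq_abs two_pos (by norm_num) hL).symm
      _ ≤ 2 ^ (x * β ^ (1 / t)) := rpow_le_rpow_of_exponent_le one_le_two h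
      _ ≤ k := hexp
    calc x ^ t * L ≤ x ^ t * k := mul_le_mul_of_nonneg_left hLk (by positivity)
      _ ≤ ℓ ^ t * k := by gcongr
      _ ≤ k * (2 * ℓ ^ t) := by nlinarith [rpow_pos_of_pos hℓ t]
  · have hβℓ : x ^ t * β < ℓ ^ t := calc
      x ^ t * β = (x * β ^ (1 / t)) ^ t := by
        rw [mul_rpow hx.le (by positivity), ← rpow_mul hβ, one_div_mul_cancel ht.ne', rpow_one]
      _ < ℓ ^ t := rpow_lt_rpow (by positivity) h ht
    calc x ^ t * L ≤ x ^ t * (k * (1 + β)) := mul_le_mul_of_nonneg_left hlog (by positivity)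
      _ = k * (x ^ t + x ^ t * β) := by ring
      _ ≤ k * (ℓ ^ t + ℓ ^ t) := by gcongr
      _ = k * (2 * ℓ ^ t) := by ring

/-- Pyber's lemma: if `|G| ≥ 4`, `N ⊴ G` nilpotent and
`k(G/N) ≥ 2^(x·(log₂|G/N|)^(1/t))` with `0 < x ≤ 1`, `t ≥ 1`, then
`k(G) ≥ xᵗ·log₂|G| / (2·(log₂log₂|G|)ᵗ)`. -/
theorem stmt3 (G : Type*) [Group G] [Finite G] (N : Subgroup G) [N.Normal]
    (hG : 4 ≤ Nat.card G) (hnil : Group.IsNilpotent N) (x t : ℝ)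
    (hx0 : 0 < x) (hx1 : x ≤ 1) (ht : 1 ≤ t)
    (hQ : (Nat.card (ConjClasses (G ⧸ N)) : ℝ) ≥
      2 ^ (x * (Real.logb 2 (Nat.card (G ⧸ N))) ^ (1 / t))) :
    (Nat.card (ConjClasses G) : ℝ) ≥
      x ^ t * Real.logb 2 (Nat.card G) /
        (2 * (Real.logb 2 (Real.logb 2 (Nat.card G))) ^ t) := by
  have hlogG : 2 ≤ Real.logb 2 (Nat.card G) := by
    rw [Real.le_logb_iff_rpow_le one_lt_two (by positivity)]
    exact_mod_cast hG
  have hloglogG : 1 ≤ Real.logb 2 (Real.logb 2 (Nat.card G)) := by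
    rw [Real.le_logb_iff_rpow_le one_lt_two (by positivity)]
    simpa using hlogG
  have hquot : Nat.card (ConjClasses (G ⧸ N)) ≤ Nat.card (ConjClasses G) :=
    Nat.card_le_card_of_surjective _ (ConjClasses.map_surjective (QuotientGroup.mk'_surjective N))
  exact Real.rpow_mul_div_two_mul_logb_rpow_le hx0 (hx1.trans hloglogG) (by linarith)
    (Real.logb_nonneg one_lt_two
      (by exact_mod_cast Nat.one_le_iff_ne_zero.mpr N.index_ne_zero_of_finite))
    N.logb_card_le_card_conjClasses_mul (hQ.trans (by exact_mod_cast hquot))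
end

section
/- Every finite nilpotent group N of nilpotency class c satisfies k(N) ≥ c·|N|^(1/c) − c + 1, where k(N) is the number of conjugacy classes of N (Sherman's bound). -/
/-!
Write `Z` for the centre of `G`. Each central element is a conjugacy class of its own, lying over
the trivial class of `G ⧸ Z`, and the other classes of `G ⧸ Z` lift to further classes of `G`, so
`|Z| + k(G ⧸ Z) ≤ k(G) + 1`. Since `G ⧸ Z` has class `c - 1`, induction gives `k(G ⧸ Z) ≥ (c - 1)·|G ⧸ Z|^(1/(c-1)) - c + 2`, and the weighted AM-GM
inequality `c·(a^(c-1)·b)^(1/c) ≤ (c - 1)·a + b` with `a = |G ⧸ Z|^(1/(c-1))`, `b = |Z|`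
turns `|Z| + (c - 1)·|G ⧸ Z|^(1/(c-1))` into the bound `c·|G|^(1/c)`.
-/

open Subgroup

theorem Nat.card_subtype_ne_add_one {α : Type*} [Finite α] (a : α) :
    Nat.card {x // x ≠ a} + 1 = Nat.card α := by
  classical
  rw [← Nat.card_unique (α := {x // x = a}), ← Nat.card_sum]
  exact Nat.card_congr ((Equiv.sumComm _ _).trans (Equiv.sumCompl _))

theorem card_add_card_conjClasses_quotient_le {G : Type*} [Group G] [Finite G] (H : Subgroup G)
    [H.Normal] (hH : H ≤ center G) :
    Nat.card H + Nat.card (ConjClasses (G ⧸ H)) ≤ Nat.card (ConjClasses G) + 1 := by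
  set π := ConjClasses.map (QuotientGroup.mk' H)
  have hπ : Function.Surjective π :=
    ConjClasses.map_surjective (QuotientGroup.mk'_surjective H)
  let lift : {x : ConjClasses (G ⧸ H) // x ≠ 1} → ConjClasses G :=
    fun x => Function.surjInv hπ x
  have hH1 (h : H) : π (ConjClasses.mk (h : G)) = 1 := by
    rw [ConjClasses.one_eq_mk_one]
    exact congrArg ConjClasses.mk ((QuotientGroup.eq_one_iff (h : G)).2 h.2)
  have hinj : Function.Injective (Sum.elim (fun h : H => ConjClasses.mk (h : G)) lift) := by
    refine Function.Injective.sumElim ?_ ?_ ?_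
    · intro g h hgh
      exact Subtype.ext ((ConjClasses.mk_eq_mk_iff_isConj.1 hgh).eq_of_left_mem_center (hH g.2))
    · exact (Function.injective_surjInv hπ).comp Subtype.val_injective
    · intro h x hx
      refine x.2 (.symm ?_)
      calc 1 = π (ConjClasses.mk (h : G)) := (hH1 h).symm
        _ = π (lift x) := congrArg π hx
        _ = x := Function.surjInv_eq hπ x
  have := Nat.card_le_card_of_injective _ hinj
  rw [Nat.card_sum] at this
  have := Nat.card_subtype_ne_add_one (1 : ConjClasses (G ⧸ H))
  omega

theorem add_mul_rpow_inv_le (c : ℕ) {a b : ℝ} (ha : 0 ≤ a) (hb : 0 ≤ b) :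
    ((c : ℝ) + 1) * (a ^ c * b) ^ ((1 : ℝ) / (c + 1)) ≤ c * a + b := by
  have hc : (0 : ℝ) < c + 1 := by positivity
  have hw : (c : ℝ) / (c + 1) + 1 / (c + 1) = 1 := by field_simp
  have amgm := Real.geom_mean_le_arith_mean2_weighted (by positivity) (by positivity) ha hb hw
  have hsplit : (a ^ c * b) ^ ((1 : ℝ) / (c + 1)) =
      a ^ ((c : ℝ) / (c + 1)) * b ^ ((1 : ℝ) / (c + 1)) := by
    rw [Real.mul_rpow (by positivity) hb, ← Real.rpow_natCast, ← Real.rpow_mul ha, mul_one_div]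
  rw [hsplit]
  calc ((c : ℝ) + 1) * (a ^ ((c : ℝ) / (c + 1)) * b ^ ((1 : ℝ) / (c + 1)))
      ≤ (c + 1) * (c / (c + 1) * a + 1 / (c + 1) * b) := by gcongr
    _ = c * a + b := by field_simp

theorem le_card_conjClasses_of_nilpotencyClass_eq (c : ℕ) (G : Type*) [Group G] [Finite G]
    [Group.IsNilpotent G] (hG : Group.nilpotencyClass G = c) :
    c * (Nat.card G : ℝ) ^ ((1 : ℝ) / c) - c + 1 ≤ Nat.card (ConjClasses G) := by
  induction c generalizing G with
  | zero =>
    have : 0 < Nat.card (ConjClasses G) := Nat.card_pos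
    push_cast
    linarith [(Nat.one_le_cast (α := ℝ)).2 this]
  | succ c ih =>
    have hQ : Group.nilpotencyClass (G ⧸ center G) = c := by
      rw [Group.nilpotencyClass_quotient_center, hG, Nat.add_sub_cancel]
    have hcount : (Nat.card (center G) : ℝ) + Nat.card (ConjClasses (G ⧸ center G)) ≤
        Nat.card (ConjClasses G) + 1 := by
      exact_mod_cast card_add_card_conjClasses_quotient_le (center G) le_rfl
    have hcard : (Nat.card G : ℝ) = Nat.card (G ⧸ center G) * Nat.card (center G) := by
      exact_mod_cast card_eq_card_quotient_mul_card_subgroup (center G)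
    set m : ℝ := (Nat.card (G ⧸ center G) : ℝ)
    have hroot : (m ^ ((1 : ℝ) / c)) ^ c = m := by
      rcases eq_or_ne c 0 with rfl | hc
      -- here `m ^ (1 / 0) = m ^ 0 = 1`, which is `m` only because `G ⧸ center G` is trivial
      · have : Subsingleton (G ⧸ center G) := Group.nilpotencyClass_zero_iff_subsingleton.1 hQ
        simp [m, Nat.card_unique]
      · rw [one_div, Real.rpow_inv_natCast_pow (Nat.cast_nonneg _) hc]
    have amgm := add_mul_rpow_inv_le c (by positivity : 0 ≤ m ^ ((1 : ℝ) / c))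
      (Nat.cast_nonneg (Nat.card (center G)))
    rw [hroot, ← hcard] at amgm
    push_cast
    linarith [ih (G ⧸ center G) hQ]

theorem stmt4_general (N : Type*) [Group N] [Finite N] [Group.IsNilpotent N]
    (c : ℕ) (hc : c = Group.nilpotencyClass N) :
    (Nat.card (ConjClasses N) : ℝ) ≥
      c * (Nat.card N : ℝ) ^ ((1 : ℝ) / c) - c + 1 :=
  le_card_conjClasses_of_nilpotencyClass_eq c N hc.symm

/-- Sherman's bound: a finite nilpotent group of nilpotency class `c ≥ 1` satisfies
`k(N) ≥ c·|N|^(1/c) − c + 1`. -/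
theorem stmt4 (N : Type*) [Group N] [Finite N] [Group.IsNilpotent N]
    (c : ℕ) (hc : c = Group.nilpotencyClass N) (hc1 : 1 ≤ c) :
    (Nat.card (ConjClasses N) : ℝ) ≥
      c * (Nat.card N : ℝ) ^ ((1 : ℝ) / c) - c + 1 :=
  stmt4_general N c hc
end

section
/- If k(T) ≥ |K|^(1/7)/|S| and k(T) ≥ |S|^α with |T| = |S|·|K| and 0 < α ≤ 1, then k(T) ≥ |T|^(α/(8+7α)). -/
/-- If `T` is a finite group, `K ⊴ T` with `S = T/K`, `0 < α ≤ 1`, and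
`k(T) ≥ |K|^(1/7)/|S|` and `k(T) ≥ |S|^α`, then `k(T) ≥ |T|^(α/(8+7α))`. -/
theorem stmt7 (T : Type*) [Group T] [Finite T] (K : Subgroup T) [K.Normal] (α : ℝ)
    (hα0 : 0 < α) (hα1 : α ≤ 1)
    (h1 : (Nat.card (ConjClasses T) : ℝ) ≥
      (Nat.card K : ℝ) ^ ((1 : ℝ) / 7) / (Nat.card (T ⧸ K) : ℝ))
    (h2 : (Nat.card (ConjClasses T) : ℝ) ≥ (Nat.card (T ⧸ K) : ℝ) ^ α) :
    (Nat.card (ConjClasses T) : ℝ) ≥ (Nat.card T : ℝ) ^ (α / (8 + 7 * α)) := by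
  set k : ℝ := (Nat.card (ConjClasses T) : ℝ) with hk
  set n : ℝ := (Nat.card K : ℝ) with hn
  set s : ℝ := (Nat.card (T ⧸ K) : ℝ) with hs
  have hnpos : (0:ℝ) < n := by
    rw [hn]; exact_mod_cast Nat.card_pos (α := K)
  have hspos : (0:ℝ) < s := by
    rw [hs]; exact_mod_cast Nat.card_pos (α := T ⧸ K)
  have hkpos : (0:ℝ) < k := by
    rw [hk]; exact_mod_cast Nat.card_pos (α := ConjClasses T)
  have hd : (0:ℝ) < 8 + 7 * α := by linarith
  set β : ℝ := α / (8 + 7 * α) with hβ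
  have hβpos : 0 < β := div_pos hα0 hd
  have hcard : (Nat.card T : ℝ) = s * n := by
    rw [hs, hn]
    exact_mod_cast congrArg (Nat.cast : ℕ → ℝ)
      (Subgroup.card_eq_card_quotient_mul_card_subgroup K)
  have hexp : 7 * β + 8 * β / α = 1 := by
    rw [hβ]; field_simp; ring
  have h1' : k ^ (7 * β) ≥ (n ^ ((1:ℝ)/7) / s) ^ (7 * β) := by
    apply Real.rpow_le_rpow (by positivity) h1 (by positivity)
  have h2' : k ^ (8 * β / α) ≥ (s ^ α) ^ (8 * β / α) := by
    apply Real.rpow_le_rpow (by positivity) h2 (by positivity)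
  have key : k ≥ (n ^ ((1:ℝ)/7) / s) ^ (7 * β) * (s ^ α) ^ (8 * β / α) := by
    calc k = k ^ (7 * β) * k ^ (8 * β / α) := by
            rw [← Real.rpow_add hkpos, hexp, Real.rpow_one]
      _ ≥ (n ^ ((1:ℝ)/7) / s) ^ (7 * β) * (s ^ α) ^ (8 * β / α) := by
            apply mul_le_mul h1' h2' (by positivity) (by positivity)
  have hrhs : (n ^ ((1:ℝ)/7) / s) ^ (7 * β) * (s ^ α) ^ (8 * β / α)
      = (Nat.card T : ℝ) ^ β := by
    rw [hcard, Real.div_rpow (by positivity) hspos.le,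
      ← Real.rpow_mul hnpos.le, ← Real.rpow_mul hspos.le,
      Real.mul_rpow hspos.le hnpos.le]
    have e1 : (1:ℝ)/7 * (7 * β) = β := by ring
    have e2 : α * (8 * β / α) = 8 * β := by field_simp
    rw [e1, e2, div_mul_eq_mul_div, mul_div_assoc, ← Real.rpow_sub hspos]
    have e3 : 8 * β - 7 * β = β := by ring
    rw [e3]; ring
  rw [← hrhs]
  exact key
end

section
/- Every finite solvable group of derived length at most 3 satisfies k(G) ≥ |G|^(1/7), where k(G) is the number of conjugacy classes (Bertram's theorem). -/
/-!
If `A` is an abelian subgroup of `G`, then `G` has at least as many commuting pairs as `A`,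
which gives `|G| ≤ k(G) · [G : A]²`. When `G⁽ⁿ⁾ = 1`, take `A = G⁽ⁿ⁻¹⁾`; the quotient
`G / A` has shorter derived length and `k(G / A) ≤ k(G)`, so induction on the derived length
`n` gives `|G| ≤ k(G) ^ (2 ^ n - 1)`, and `2 ^ 3 - 1 = 7`.
-/

open Subgroup

lemma card_conjClasses_quotient_le {G : Type*} [Group G] [Finite G]
    (N : Subgroup G) [N.Normal] :
    Nat.card (ConjClasses (G ⧸ N)) ≤ Nat.card (ConjClasses G) :=
  Nat.card_le_card_of_surjective _
    (ConjClasses.map_surjective (QuotientGroup.mk'_surjective N))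

lemma Subgroup.card_le_card_conjClasses_mul_index_sq {G : Type*} [Group G] [Finite G]
    (A : Subgroup G) [IsMulCommutative A] :
    Nat.card G ≤ Nat.card (ConjClasses G) * A.index ^ 2 := by
  have hA : commProb A ≤ commProb G * (A.index : ℚ) ^ 2 := A.commProb_subgroup_le
  have hG : (0 : ℚ) < Nat.card G := Nat.cast_pos.mpr Nat.card_pos
  rw [commProb_eq_one_iff.mpr ‹_›, commProb_def', div_mul_eq_mul_div, le_div_iff₀ hG,
    one_mul] at hA
  exact_mod_cast hA

lemma isMulCommutative_derivedSeries_of_succ_eq_bot {G : Type*} [Group G] {n : ℕ}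
    (h : derivedSeries G (n + 1) = ⊥) : IsMulCommutative (derivedSeries G n) := by
  rwa [derivedSeries_succ, commutator_self_eq_bot_iff] at h

lemma derivedSeries_quotient_derivedSeries_eq_bot (G : Type*) [Group G] (n : ℕ) :
    derivedSeries (G ⧸ derivedSeries G n) n = ⊥ := by
  rw [← map_derivedSeries_eq (QuotientGroup.mk'_surjective _) n, Subgroup.map_eq_bot_iff,
    QuotientGroup.ker_mk']

theorem card_le_card_conjClasses_pow_of_derivedSeries_eq_bot {n : ℕ} :
    ∀ {G : Type*} [Group G] [Finite G], derivedSeries G n = ⊥ →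
      Nat.card G ≤ Nat.card (ConjClasses G) ^ (2 ^ n - 1) := by
  induction n with
  | zero =>
    intro G _ _ h
    rw [derivedSeries_zero, ← card_eq_one, card_top] at h
    simp [h]
  | succ n ih =>
    intro G _ _ h
    set A := derivedSeries G n
    have : IsMulCommutative A := isMulCommutative_derivedSeries_of_succ_eq_bot h
    have hquot : A.index ≤ Nat.card (ConjClasses G) ^ (2 ^ n - 1) := by
      calc A.index = Nat.card (G ⧸ A) := A.index_eq_card
        _ ≤ Nat.card (ConjClasses (G ⧸ A)) ^ (2 ^ n - 1) :=
          ih (derivedSeries_quotient_derivedSeries_eq_bot G n)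
        _ ≤ Nat.card (ConjClasses G) ^ (2 ^ n - 1) :=
          Nat.pow_le_pow_left (card_conjClasses_quotient_le A) _
    have hexp : 2 ^ (n + 1) - 1 = 1 + (2 ^ n - 1) * 2 := by
      have := Nat.one_le_two_pow (n := n)
      rw [pow_succ]
      omega
    calc Nat.card G ≤ Nat.card (ConjClasses G) * A.index ^ 2 :=
          A.card_le_card_conjClasses_mul_index_sq
      _ ≤ Nat.card (ConjClasses G) * (Nat.card (ConjClasses G) ^ (2 ^ n - 1)) ^ 2 := by
          gcongr
      _ = Nat.card (ConjClasses G) ^ (2 ^ (n + 1) - 1) := by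
          rw [hexp, pow_add, pow_one, pow_mul]

/-- Bertram's theorem: a finite solvable group of derived length at most 3
satisfies `k(G) ≥ |G|^(1/7)`. -/
theorem stmt9 (G : Type*) [Group G] [Finite G] (h : derivedSeries G 3 = ⊥) :
    (Nat.card (ConjClasses G) : ℝ) ≥ (Nat.card G : ℝ) ^ ((1 : ℝ) / 7) := by
  have hcard : Nat.card G ≤ Nat.card (ConjClasses G) ^ 7 :=
    card_le_card_conjClasses_pow_of_derivedSeries_eq_bot h
  rw [ge_iff_le, one_div, Real.rpow_inv_le_iff_of_pos (by positivity) (by positivity)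
    (by norm_num)]
  exact_mod_cast hcard
end

section
/- Let G be a finite solvable group with |G| ≥ 4 and suppose that for every finite solvable group H with trivial Frattini subgroup we have k(H) ≥ |H|^β for a constant 0 < β ≤ 1. Then k(G) ≥ (β/2)·log₂|G|/log₂ log₂|G|. -/
/-!
Let `Φ = Φ(G)`, `h = |G : Φ|` and `k = k(G)`. Theorem B for `G/Φ`, which has trivial Frattini
subgroup, gives `h ^ β ≤ k(G/Φ) ≤ k`. In the lower central series `Φ = Φ₀ > Φ₁ > ⋯ > Φₘ = 1`
of the nilpotent group `Φ` (taken in `G`, `Φⱼ₊₁ = ⁅Φⱼ, Φ⁆`), the image of `Φⱼ` in `G/Φⱼ₊₁` is a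
normal subgroup centralized by the image of `Φ`, so its order is at most `k · h`
(Pyber's counting argument); hence `|G| ≤ h (k h) ^ m`. Elements taken from the successive
differences of this strict chain of normal subgroups lie in distinct classes, so `m + 1 ≤ k`.
Together these give `β log |G| ≤ 2 k log k`, and inverting `x ↦ x log x` yields the bound.
-/

open Subgroup Real

section Frattini

variable {G H : Type*} [Group G] [Group H] {φ : G →* H}

lemma Subgroup.isCoatom_map_of_ker_le (hφ : Function.Surjective φ) {M : Subgroup G}
    (hker : φ.ker ≤ M) (hM : IsCoatom M) : IsCoatom (M.map φ) := by
  refine ⟨fun htop ↦ hM.1 ?_, fun K hK ↦ ?_⟩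
  · rw [← comap_map_eq_self hker, htop, comap_top]
  · have hlt : M < K.comap φ := by
      rw [← comap_map_eq_self hker]
      exact (comap_lt_comap_of_surjective hφ).mpr hK
    exact comap_injective hφ (by rw [hM.2 _ hlt, comap_top])

lemma comap_frattini_le_of_ker_le (hφ : Function.Surjective φ) (hker : φ.ker ≤ frattini G) :
    (frattini H).comap φ ≤ frattini G := by
  refine le_iInf₂ fun M hM ↦ ?_
  have hkerM : φ.ker ≤ M := hker.trans (frattini_le_coatom hM)
  calc (frattini H).comap φ ≤ (M.map φ).comap φ :=
        comap_mono (frattini_le_coatom (isCoatom_map_of_ker_le hφ hkerM hM))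
    _ = M := comap_map_eq_self hkerM

end Frattini

lemma frattini_quotient_frattini_eq_bot (G : Type*) [Group G] :
    frattini (G ⧸ frattini G) = ⊥ := by
  have hsurj := QuotientGroup.mk'_surjective (frattini G)
  have hker := QuotientGroup.ker_mk' (frattini G)
  rw [← map_comap_eq_self_of_surjective hsurj (frattini _), Subgroup.map_eq_bot_iff, hker]
  exact comap_frattini_le_of_ker_le hsurj hker.le

lemma Subgroup.lowerCentralSeries_succ_lt {G : Type*} [Group G] {S : Subgroup G} {j m : ℕ}
    (hm : S.lowerCentralSeries m = ⊥) (hj : S.lowerCentralSeries j ≠ ⊥) :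
    S.lowerCentralSeries (j + 1) < S.lowerCentralSeries j := by
  refine lt_of_le_of_ne (S.lowerCentralSeries_antitone j.le_succ) fun heq ↦ hj ?_
  have hconst (i : ℕ) : S.lowerCentralSeries (j + i) = S.lowerCentralSeries j := by
    induction i with
    | zero => rfl
    | succ i ih => rw [← add_assoc, lowerCentralSeries_succ, ih, ← lowerCentralSeries_succ, heq]
  rw [← hconst m, eq_bot_iff, ← hm]
  exact S.lowerCentralSeries_antitone (Nat.le_add_left m j)

section ConjClasses

variable {G : Type*} [Group G]

lemma card_conjClasses_le_of_surjective {H : Type*} [Group H] [Finite G] {f : G →* H}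
    (hf : Function.Surjective f) : Nat.card (ConjClasses H) ≤ Nat.card (ConjClasses G) :=
  Nat.card_le_card_of_surjective _ (ConjClasses.map_surjective hf)

lemma Subgroup.Normal.mem_of_isConj {N : Subgroup G} (hN : N.Normal) {a b : G} (hab : IsConj a b)
    (ha : a ∈ N) : b ∈ N := by
  obtain ⟨c, rfl⟩ := isConj_iff.mp hab
  exact hN.conj_mem a ha c

lemma card_le_card_conjClasses_mul_index [Finite G] {N P : Subgroup G} (hN : N.Normal)
    (hNP : N ≤ centralizer P) : Nat.card N ≤ Nat.card (ConjClasses G) * P.index := by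
  obtain ⟨rep, hrep⟩ : ∃ rep : ConjClasses G → G, ∀ c, ConjClasses.mk (rep c) = c :=
    ⟨_, fun c ↦ (ConjClasses.mk_surjective c).choose_spec⟩
  have hconj (x : N) : ∃ g : G, g * rep (ConjClasses.mk x) * g⁻¹ = x :=
    isConj_iff.mp (ConjClasses.mk_eq_mk_iff_isConj.mp (hrep _))
  choose g hg using hconj
  -- `x ↦ (class of x, g x • P)` is injective: `P` centralizes the class representatives.
  rw [Subgroup.index, ← Nat.card_prod]
  refine Nat.card_le_card_of_injective (fun x : N ↦ (ConjClasses.mk (x : G), (g x : G ⧸ P))) ?_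
  rintro x y hxy
  obtain ⟨hcls, hcoset⟩ : ConjClasses.mk (x : G) = ConjClasses.mk (y : G) ∧
      (g x : G ⧸ P) = g y := Prod.ext_iff.mp hxy
  have hp : (g x)⁻¹ * g y ∈ P := QuotientGroup.eq.mp hcoset
  have hx := hg x
  have hy := hg y
  rw [← hcls] at hy
  have hr : rep (ConjClasses.mk (x : G)) ∈ N :=
    hN.mem_of_isConj (ConjClasses.mk_eq_mk_iff_isConj.mp (hrep _)).symm x.2
  generalize rep (ConjClasses.mk (x : G)) = r at hx hy hr
  have hcomm : ((g x)⁻¹ * g y) * r = r * ((g x)⁻¹ * g y) :=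
    mem_centralizer_iff.mp (hNP hr) _ hp
  ext
  calc (x : G) = g x * r * (g x)⁻¹ := hx.symm
    _ = g x * (((g x)⁻¹ * g y) * r) * ((g x)⁻¹ * g y)⁻¹ * (g x)⁻¹ := by rw [hcomm]; group
    _ = y := by rw [← hy]; group

lemma add_one_le_card_conjClasses [Finite G] {A : ℕ → Subgroup G} (hA : ∀ j, (A j).Normal)
    (hanti : Antitone A) {m : ℕ} (hlt : ∀ j < m, A (j + 1) < A j) :
    m + 1 ≤ Nat.card (ConjClasses G) := by
  have hx (j : Fin (m + 1)) : ∃ x ∈ A j, (j : ℕ) < m → x ∉ A (j + 1) := by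
    by_cases hj : (j : ℕ) < m
    · obtain ⟨x, hx, hx'⟩ := SetLike.exists_of_lt (hlt j hj)
      exact ⟨x, hx, fun _ ↦ hx'⟩
    · exact ⟨1, one_mem _, fun h ↦ absurd h hj⟩
  choose x hxA hxA' using hx
  have hne (i j : Fin (m + 1)) (hij : i < j) : ConjClasses.mk (x i) ≠ ConjClasses.mk (x j) := by
    intro heq
    have hj : x j ∈ A (i + 1) := hanti (Nat.succ_le_of_lt hij) (hxA j)
    exact hxA' i (by omega) ((hA _).mem_of_isConj
      (ConjClasses.mk_eq_mk_iff_isConj.mp heq.symm) hj)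
  have hinj : Function.Injective fun i ↦ ConjClasses.mk (x i) := by
    intro i j heq
    by_contra hij
    rcases lt_or_gt_of_ne hij with h | h
    exacts [hne i j h heq, hne j i h heq.symm]
  simpa using Nat.card_le_card_of_injective _ hinj

lemma card_le_card_conjClasses_mul_index_mul_card [Finite G] {N K P : Subgroup G} [N.Normal]
    [K.Normal] (hKN : K ≤ N) (hKP : K ≤ P) (hNP : ⁅N, P⁆ ≤ K) :
    Nat.card N ≤ Nat.card (ConjClasses G) * P.index * Nat.card K := by
  have hπ := QuotientGroup.mk'_surjective K
  have hker := QuotientGroup.ker_mk' K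
  have hcent : N.map (QuotientGroup.mk' K) ≤ centralizer (P.map (QuotientGroup.mk' K)) := by
    rw [← commutator_eq_bot_iff_le_centralizer, ← map_commutator, Subgroup.map_eq_bot_iff, hker]
    exact hNP
  have hcardN : Nat.card N = Nat.card (N.map (QuotientGroup.mk' K)) * Nat.card K := by
    rw [← relIndex_bot_left, ← relIndex_mul_relIndex ⊥ K N bot_le hKN, relIndex_bot_left,
      ← relIndex_ker, hker, mul_comm]
  calc Nat.card N
      = Nat.card (N.map (QuotientGroup.mk' K)) * Nat.card K := hcardN
    _ ≤ Nat.card (ConjClasses (G ⧸ K)) * (P.map (QuotientGroup.mk' K)).index * Nat.card K := by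
      gcongr
      exact card_le_card_conjClasses_mul_index (Normal.map inferInstance _ hπ) hcent
    _ ≤ Nat.card (ConjClasses G) * P.index * Nat.card K := by
      rw [index_map_eq P hπ (hker.trans_le hKP)]
      gcongr
      exact card_conjClasses_le_of_surjective hπ

lemma card_le_pow_of_lowerCentralSeries_eq_bot [Finite G] {S : Subgroup G} [S.Normal] {m : ℕ}
    (hm : S.lowerCentralSeries m = ⊥) :
    Nat.card S ≤ (Nat.card (ConjClasses G) * S.index) ^ m := by
  have hlayer (j : ℕ) : Nat.card (S.lowerCentralSeries j) ≤
      Nat.card (ConjClasses G) * S.index * Nat.card (S.lowerCentralSeries (j + 1)) :=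
    card_le_card_conjClasses_mul_index_mul_card (S.lowerCentralSeries_antitone j.le_succ)
      (S.lowerCentralSeries_le_self _) le_rfl
  have hiter (j : ℕ) : Nat.card S ≤
      (Nat.card (ConjClasses G) * S.index) ^ j * Nat.card (S.lowerCentralSeries j) := by
    induction j with
    | zero => simp
    | succ j ih =>
      calc Nat.card S ≤ _ := ih
        _ ≤ _ := Nat.mul_le_mul_left _ (hlayer j)
        _ = _ := by ring
  simpa [hm] using hiter m

end ConjClasses

lemma mul_logb_le_of_le_mul_pow {β n h k : ℝ} (m : ℕ) (hβ0 : 0 < β) (hβ1 : β ≤ 1) (hn : 0 < n)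
    (hh : 1 ≤ h) (hhk : h ^ β ≤ k) (hnh : n ≤ h * (k * h) ^ m) :
    β * logb 2 n ≤ 2 * (m + 1) * logb 2 k := by
  have hk : 1 ≤ k := (one_le_rpow hh hβ0.le).trans hhk
  have hlogh : β * logb 2 h ≤ logb 2 k := by
    rw [← logb_rpow_eq_mul_logb_of_pos (by positivity)]
    exact logb_le_logb_of_le one_lt_two (by positivity) hhk
  have hlogn : logb 2 n ≤ (m + 1) * logb 2 h + m * logb 2 k :=
    calc logb 2 n ≤ logb 2 (h * (k * h) ^ m) := logb_le_logb_of_le one_lt_two hn hnh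
      _ = (m + 1) * logb 2 h + m * logb 2 k := by
        rw [logb_mul (by positivity) (by positivity), logb_pow, logb_mul (by positivity)
          (by positivity)]
        ring
  have hlogk : 0 ≤ logb 2 k := logb_nonneg one_lt_two hk
  have hm : (0 : ℝ) ≤ m := m.cast_nonneg
  calc β * logb 2 n ≤ β * ((m + 1) * logb 2 h + m * logb 2 k) := by gcongr
    _ = (m + 1) * (β * logb 2 h) + β * (m * logb 2 k) := by ring
    _ ≤ (m + 1) * logb 2 k + 1 * (m * logb 2 k) := by gcongr
    _ ≤ 2 * (m + 1) * logb 2 k := by nlinarith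

lemma div_logb_le_of_le_mul_logb {c L x : ℝ} (hc : c ≤ 1) (hL : 2 ≤ L) (hx : 1 ≤ x)
    (h : c * L ≤ x * logb 2 x) : c * L / logb 2 L ≤ x := by
  have hlogL : 1 ≤ logb 2 L := by
    rw [le_logb_iff_rpow_le one_lt_two (by linarith)]
    simpa using hL
  rw [div_le_iff₀ (by linarith)]
  rcases le_or_gt L x with hLx | hxL
  · nlinarith
  · have : logb 2 x ≤ logb 2 L := logb_le_logb_of_le one_lt_two (by linarith) hxL.le
    nlinarith

/-- If every finite solvable group with trivial Frattini subgroup `H` satisfies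
`k(H) ≥ |H|^β` (for a constant `0 < β ≤ 1`), then every finite solvable group `G`
with `|G| ≥ 4` satisfies `k(G) ≥ (β/2)·log₂|G|/log₂log₂|G|`. -/
theorem stmt13 (β : ℝ) (hβ0 : 0 < β) (hβ1 : β ≤ 1)
    (hB : ∀ (H : Type) [Group H] [Finite H], IsSolvable H → frattini H = ⊥ →
      (Nat.card (ConjClasses H) : ℝ) ≥ (Nat.card H : ℝ) ^ β)
    (G : Type) [Group G] [Finite G] [Group.IsSolvable G] (hG : 4 ≤ Nat.card G) :
    (Nat.card (ConjClasses G) : ℝ) ≥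
      (β / 2) * Real.logb 2 (Nat.card G) / Real.logb 2 (Real.logb 2 (Nat.card G)) := by
  classical
  set Φ := frattini G
  set k := Nat.card (ConjClasses G)
  have hex := (isNilpotent_iff_lowerCentralSeries Φ).mp frattini_nilpotent
  set m := Nat.find hex
  have hm : Φ.lowerCentralSeries m = ⊥ := Nat.find_spec hex
  have hchain : m + 1 ≤ k := add_one_le_card_conjClasses (fun _ ↦ inferInstance)
    Φ.lowerCentralSeries_antitone fun _ hj ↦
      lowerCentralSeries_succ_lt hm (Nat.find_min hex hj)
  have hquot : (Φ.index : ℝ) ^ β ≤ k :=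
    (hB (G ⧸ Φ) (inferInstanceAs (Group.IsSolvable _)) (frattini_quotient_frattini_eq_bot G)).trans
      (by exact_mod_cast card_conjClasses_le_of_surjective (QuotientGroup.mk'_surjective Φ))
  have hcard : Nat.card G ≤ Φ.index * (k * Φ.index) ^ m := by
    rw [← index_mul_card Φ]
    exact Nat.mul_le_mul_left _ (card_le_pow_of_lowerCentralSeries_eq_bot hm)
  have hlog := mul_logb_le_of_le_mul_pow (n := Nat.card G) m hβ0 hβ1 (by positivity)
    (by exact_mod_cast Nat.one_le_iff_ne_zero.mpr index_ne_zero_of_finite) hquot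
    (by exact_mod_cast hcard)
  refine ge_iff_le.mpr
    (div_logb_le_of_le_mul_logb (by linarith) ?_ (by exact_mod_cast Nat.card_pos) ?_)
  · rw [le_logb_iff_rpow_le one_lt_two (by positivity)]
    norm_num
    exact_mod_cast hG
  · calc β / 2 * logb 2 (Nat.card G) ≤ (m + 1) * logb 2 k := by linarith
      _ ≤ k * logb 2 k := by
        gcongr
        · exact logb_nonneg one_lt_two (by exact_mod_cast Nat.card_pos)
        · exact_mod_cast hchain
end

section
/- Let G be a finite solvable Frobenius group with abelian Frobenius kernel N, and suppose k(G/Φ(G)) ≥ |G/Φ(G)|^β for a constant 0 < β ≤ 1. Since N = F(G) contains Φ(G) and Φ(G) is abelian, k(G) > |G|^(β/(2+β)). -/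
/-!
`Φ(G)` is a nilpotent normal subgroup, so it centralises a nontrivial element of `N` (one in
the centre of `Φ(G)` if `Φ(G) ∩ N ≠ 1`, any one otherwise); since centralisers of nontrivial
elements of an abelian Frobenius kernel lie in the kernel, `Φ(G) ≤ N`. Thus `Φ(G)` is abelian
of index `q > 1`, and counting commuting pairs gives `|G| < k(G) q²`, while
`k(G) ≥ k(G/Φ(G)) ≥ q^β`. The first bound wins when `q ≤ |G|^(1/(2+β))`, the second otherwise.
-/

/-- `N` is a Frobenius kernel of `G`: a proper nontrivial normal subgroup with a
complement acting fixed-point-freely by conjugation. -/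
def IsFrobeniusKernel {G : Type*} [Group G] (N : Subgroup G) : Prop :=
  N.Normal ∧ N ≠ ⊥ ∧ N ≠ ⊤ ∧ ∃ H : Subgroup G, N.IsComplement' H ∧
    ∀ h ∈ H, h ≠ 1 → ∀ n ∈ N, h * n * h⁻¹ = n → n = 1

theorem Subgroup.Normal.inf_center_ne_bot {H : Type*} [Group H] [Group.IsNilpotent H]
    {K : Subgroup H} (hK : K.Normal) (hne : K ≠ ⊥) : K ⊓ center H ≠ ⊥ := by
  suffices ∀ j, K ⊓ upperCentralSeries H j ≠ ⊥ → K ⊓ center H ≠ ⊥ by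
    obtain ⟨j, hj⟩ := Group.IsNilpotent.nilpotent H
    exact this j (by rwa [hj, inf_top_eq])
  intro j
  induction j with
  | zero => simp
  | succ j ih =>
    intro hne_succ
    by_cases hj : K ⊓ upperCentralSeries H j = ⊥
    · refine ne_bot_of_le_ne_bot hne_succ (le_inf inf_le_left fun k hk ↦ ?_)
      obtain ⟨hkK, hkZ⟩ := mem_inf.mp hk
      refine mem_center_iff.mpr fun y ↦ (commutatorElement_eq_one_iff_commute.mp ?_).symm
      rw [← mem_bot, ← hj]
      refine mem_inf.mpr ⟨?_, mem_upperCentralSeries_succ_iff.mp hkZ y⟩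
      simpa only [commutatorElement_def, mul_assoc] using
        K.mul_mem hkK (hK.conj_mem _ (K.inv_mem hkK) y)
    · exact ih hj

namespace IsFrobeniusKernel

variable {G : Type*} [Group G] {N : Subgroup G}

theorem mem_of_commute (hN : IsFrobeniusKernel N) (hab : ∀ x y : N, Commute x y) {n x : G}
    (hn : n ∈ N) (hn1 : n ≠ 1) (hx : Commute x n) : x ∈ N := by
  obtain ⟨-, -, -, H, hNH, hfree⟩ := hN
  obtain ⟨⟨⟨m, hm⟩, ⟨h, hh⟩⟩, rfl⟩ := (hNH.existsUnique x).exists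
  have hmn : Commute m n := congrArg Subtype.val (hab ⟨m, hm⟩ ⟨n, hn⟩)
  have hhn : Commute h n := by simpa using hmn.inv_left.mul_left hx
  by_cases h1 : h = 1
  · simpa [h1] using hm
  · exact absurd (hfree h hh h1 n hn (mul_inv_eq_of_eq_mul hhn.eq)) hn1

theorem le_of_isNilpotent (hN : IsFrobeniusKernel N) (hab : ∀ x y : N, Commute x y)
    (P : Subgroup G) [P.Normal] [Group.IsNilpotent P] : P ≤ N := by
  have := hN.1
  obtain ⟨n, hn, hn1, hPn⟩ : ∃ n ∈ N, n ≠ 1 ∧ ∀ x ∈ P, Commute x n := by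
    by_cases hdis : Disjoint P N
    · obtain ⟨⟨n, hn⟩, hn1⟩ := Subgroup.ne_bot_iff_exists_ne_one.mp hN.2.1
      exact ⟨n, hn, by simpa using hn1, fun x hx ↦
        Subgroup.commute_of_normal_of_disjoint P N ‹_› ‹_› hdis x n hx hn⟩
    · have hK : N.subgroupOf P ≠ ⊥ := fun h ↦ hdis (Subgroup.subgroupOf_eq_bot.mp h).symm
      obtain ⟨⟨k, hk⟩, hk1⟩ := Subgroup.ne_bot_iff_exists_ne_one.mp
        ((Subgroup.Normal.subgroupOf ‹_› P).inf_center_ne_bot hK)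
      obtain ⟨hkN, hkZ⟩ := Subgroup.mem_inf.mp hk
      exact ⟨k, Subgroup.mem_subgroupOf.mp hkN, fun h ↦ hk1 (by ext; exact h),
        fun x hx ↦ congrArg Subtype.val (Subgroup.mem_center_iff.mp hkZ ⟨x, hx⟩)⟩
  exact fun x hx ↦ hN.mem_of_commute hab hn hn1 (hPn x hx)

theorem frattini_le [Finite G] (hN : IsFrobeniusKernel N) (hab : ∀ x y : N, Commute x y) :
    frattini G ≤ N :=
  have := frattini_nilpotent (G := G)
  hN.le_of_isNilpotent hab _

end IsFrobeniusKernel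

theorem Subgroup.card_lt_card_conjClasses_mul_index_sq {G : Type*} [Group G] [Finite G]
    (A : Subgroup G) (hA : ∀ x ∈ A, ∀ y ∈ A, Commute x y) (hA_top : A ≠ ⊤) :
    Nat.card G < Nat.card (ConjClasses G) * A.index ^ 2 := by
  obtain ⟨g, hg⟩ := not_forall.mp (mt A.eq_top_iff'.mpr hA_top)
  have hpairs : Nat.card (A × A) < Nat.card { p : G × G // Commute p.1 p.2 } := by
    have := Fintype.ofFinite G
    classical
    rw [Nat.card_eq_fintype_card, Nat.card_eq_fintype_card]
    refine Fintype.card_lt_of_injective_of_notMem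
      (fun p ↦ ⟨(p.1, p.2), hA _ p.1.2 _ p.2.2⟩) ?_
      (b := ⟨(g, 1), Commute.one_right g⟩) ?_
    · exact fun p q h ↦
        Prod.ext (Subtype.ext (congrArg (·.1.1) h)) (Subtype.ext (congrArg (·.1.2) h))
    · rintro ⟨p, hp⟩
      have hpg : (p.1 : G) = g := congrArg (·.1.1) hp
      exact hg (hpg ▸ p.1.2)
  rw [card_comm_eq_card_conjClasses_mul_card, Nat.card_prod] at hpairs
  refine Nat.lt_of_mul_lt_mul_left (a := Nat.card G) ?_
  calc Nat.card G * Nat.card G = Nat.card A * Nat.card A * A.index ^ 2 := by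
        rw [← A.card_mul_index]; ring
    _ < Nat.card (ConjClasses G) * Nat.card G * A.index ^ 2 :=
        Nat.mul_lt_mul_of_pos_right hpairs (by have := A.one_lt_index_of_ne_top hA_top; positivity)
    _ = Nat.card G * (Nat.card (ConjClasses G) * A.index ^ 2) := by ring

theorem Real.rpow_div_two_add_lt {β n q k : ℝ} (hβ : 0 < β) (hn : 0 < n) (hq : 0 < q)
    (hqk : q ^ β ≤ k) (hnk : n < k * q ^ 2) : n ^ (β / (2 + β)) < k := by
  set t := n ^ (1 / (2 + β))
  have ht_rpow : t ^ β = n ^ (β / (2 + β)) := by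
    rw [← Real.rpow_mul hn.le]
    ring_nf
  have ht_sq : n ^ (β / (2 + β)) * t ^ 2 = n := by
    rw [← Real.rpow_natCast, ← Real.rpow_mul hn.le, ← Real.rpow_add hn]
    convert Real.rpow_one n using 2
    field_simp
    push_cast
    ring
  rcases lt_or_ge t q with htq | hqt
  · calc n ^ (β / (2 + β)) = t ^ β := ht_rpow.symm
      _ < q ^ β := Real.rpow_lt_rpow (by positivity) htq hβ
      _ ≤ k := hqk
  · refine lt_of_mul_lt_mul_right ?_ (sq_nonneg q)
    calc n ^ (β / (2 + β)) * q ^ 2 ≤ n ^ (β / (2 + β)) * t ^ 2 := by gcongr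
      _ = n := ht_sq
      _ < k * q ^ 2 := hnk

theorem stmt17_general (G : Type*) [Group G] [Finite G] (N : Subgroup G)
    (hN : IsFrobeniusKernel N) (hab : ∀ x y : N, Commute x y)
    (β : ℝ) (hβ0 : 0 < β)
    (hQ : (Nat.card (ConjClasses (G ⧸ frattini G)) : ℝ) ≥
      (Nat.card (G ⧸ frattini G) : ℝ) ^ β) :
    (Nat.card (ConjClasses G) : ℝ) > (Nat.card G : ℝ) ^ (β / (2 + β)) := by
  have hΦN : frattini G ≤ N := hN.frattini_le hab
  have hΦ_top : frattini G ≠ ⊤ := fun h ↦ hN.2.2.1 (top_le_iff.mp (h ▸ hΦN))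
  have hG := (frattini G).card_lt_card_conjClasses_mul_index_sq
    (fun x hx y hy ↦ congrArg Subtype.val (hab ⟨x, hΦN hx⟩ ⟨y, hΦN hy⟩)) hΦ_top
  have hquot : Nat.card (ConjClasses (G ⧸ frattini G)) ≤ Nat.card (ConjClasses G) :=
    Nat.card_le_card_of_surjective (ConjClasses.map (QuotientGroup.mk' _))
      (ConjClasses.map_surjective Quotient.mk''_surjective)
  rw [← Subgroup.index_eq_card] at hQ
  refine Real.rpow_div_two_add_lt hβ0 (by exact_mod_cast Nat.card_pos) (q := (frattini G).index)
    (by exact_mod_cast (frattini G).index_ne_zero_of_finite.bot_lt)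
    (hQ.trans (by exact_mod_cast hquot)) (by exact_mod_cast hG)

/-- If `G` is a finite solvable Frobenius group with abelian Frobenius kernel `N`
and `k(G/Φ(G)) ≥ |G/Φ(G)|^β` with `0 < β ≤ 1`, then `k(G) > |G|^(β/(2+β))`. -/
theorem stmt17 (G : Type*) [Group G] [Finite G] [Group.IsSolvable G] (N : Subgroup G)
    (hN : IsFrobeniusKernel N) (hab : ∀ x y : N, Commute x y)
    (β : ℝ) (hβ0 : 0 < β) (hβ1 : β ≤ 1)
    (hQ : (Nat.card (ConjClasses (G ⧸ frattini G)) : ℝ) ≥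
      (Nat.card (G ⧸ frattini G) : ℝ) ^ β) :
    (Nat.card (ConjClasses G) : ℝ) > (Nat.card G : ℝ) ^ (β / (2 + β)) :=
  stmt17_general G N hN hab β hβ0 hQ
end

section
/- If G is a Frobenius group with Frobenius kernel N such that the index |G:N| is even, then N is abelian. -/
/-!
The complement of `N` has order `|G : N|`, so it contains an involution `g`. Conjugation by `g`
is a fixed-point-free automorphism of `N` of order two, and a finite group with such an
automorphism is abelian: the automorphism must be inversion, which is a homomorphism only on an
abelian group.
-/

theorem Subgroup.commute_of_conj_fixedPointFree_of_sq_eq_one {G : Type*} [Group G]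
    {N : Subgroup G} [N.Normal] [Finite N] {g : G} (hg : g ^ 2 = 1)
    (hfree : ∀ n ∈ N, g * n * g⁻¹ = n → n = 1) (x y : N) : Commute x y := by
  have hinv : Function.Involutive (MulAut.conjNormal (H := N) g) := fun n => by
    rw [← MulAut.mul_apply, ← map_mul, ← sq, hg, map_one, MulAut.one_apply]
  have hfpf : MonoidHom.FixedPointFree (MulAut.conjNormal (H := N) g) := fun n hn =>
    Subtype.ext (hfree n n.2 (congrArg Subtype.val hn))
  exact hfpf.commute_all_of_involutive hinv x y

theorem IsFrobeniusKernel.exists_conj_fixedPointFree_of_sq_eq_one {G : Type*} [Group G]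
    [Finite G] {N : Subgroup G} (hN : IsFrobeniusKernel N) (heven : Even N.index) :
    ∃ g : G, g ^ 2 = 1 ∧ ∀ n ∈ N, g * n * g⁻¹ = n → n = 1 := by
  obtain ⟨-, -, -, H, hcomp, hfree⟩ := hN
  have : Fact (Nat.Prime 2) := ⟨Nat.prime_two⟩
  obtain ⟨h, hh⟩ := exists_prime_orderOf_dvd_card' (G := H) 2
    (hcomp.symm.index_eq_card ▸ heven.two_dvd)
  rw [← Subgroup.orderOf_coe] at hh
  have hne : (h : G) ≠ 1 := fun h1 => by simp [h1] at hh
  exact ⟨h, hh ▸ pow_orderOf_eq_one (h : G), hfree h h.2 hne⟩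

/-- If `G` is a finite Frobenius group with Frobenius kernel `N` of even index,
then `N` is abelian. -/
theorem stmt18 (G : Type*) [Group G] [Finite G] (N : Subgroup G)
    (hN : IsFrobeniusKernel N) (heven : Even N.index) :
    ∀ x y : N, Commute x y := by
  have : N.Normal := hN.1
  obtain ⟨g, hg, hfree⟩ := hN.exists_conj_fixedPointFree_of_sq_eq_one heven
  exact Subgroup.commute_of_conj_fixedPointFree_of_sq_eq_one hg hfree
end
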